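/- Let q, l, k, p, n be positive integers with q < l < k < p < n, k − l − q < 0 and n−p+k−q < p−l, and let R₃ be the corresponding intersection of three quadrics in ℝ^n. Then R₃ is homeomorphic to the product of unit spheres S^{n−p+k−q−1} × S^{p−k−1} × S^{q−1}. -/

import Mathlib

/-!
Split the coordinates of `u` into the blocks `A = [0,q)`, `B = [q,l)`, `C = [l,k)`, `D = [k,p)`,
`E = [p,n)` and write `a, b, c, d, e` for their squared norms. The three equations are equivalent to
`b + c + e = n-p+k-q`, `a = c + (l+q-k)` and `d = p-k+q-a`.
So the `B C E` coordinates range over a sphere of radius `√(n-p+k-q)`; over each of its points the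
`A` coordinates range over a sphere of radius `√(c + l+q-k) > 0`, and then the `D` coordinates over
a sphere of radius `√(p-k+q-a)`, which is positive because `a ≤ n-p+l < p-k+q`. Normalising the
three blocks trivialises this tower of sphere bundles.
-/

open Metric

/-- The intersection of three quadrics in ℝⁿ associated to a product of three simplices:
`(u₁²+⋯+u_q²) + (u_{q+1}²+⋯+u_l²) + (u_{p+1}²+⋯+u_n²) = n-p+l`,
`-(u₁²+⋯+u_q²) + (u_{l+1}²+⋯+u_k²) = k-l-q`,
`(u₁²+⋯+u_q²) + (u_{k+1}²+⋯+u_p²) = p-k+q`. -/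
def quadR3 (q l k p n : ℕ) : Set (EuclideanSpace ℝ (Fin n)) :=
  {u | (∑ j : Fin n, if (j : ℕ) < l ∨ p ≤ (j : ℕ) then u j ^ 2 else 0) = (n : ℝ) - p + l ∧
       (∑ j : Fin n, if (j : ℕ) < q then -(u j ^ 2)
          else if l ≤ (j : ℕ) ∧ (j : ℕ) < k then u j ^ 2 else 0) = (k : ℝ) - l - q ∧
       (∑ j : Fin n, if (j : ℕ) < q ∨ (k ≤ (j : ℕ) ∧ (j : ℕ) < p) then u j ^ 2 else 0)
          = (p : ℝ) - k + q}

open Finset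

noncomputable section

section SphereBundle

variable {X E : Type*} [TopologicalSpace X] [NormedAddCommGroup E]

lemma ne_zero_of_norm_sq_eq {r : ℝ} {v : E} (hv : ‖v‖ ^ 2 = r) (hr : 0 < r) : v ≠ 0 := by
  rintro rfl
  rw [norm_zero, zero_pow two_ne_zero] at hv
  linarith

variable [NormedSpace ℝ E]

lemma inv_norm_smul_mem_sphere {v : E} (hv : v ≠ 0) : ‖v‖⁻¹ • v ∈ sphere (0 : E) 1 := by
  simpa using norm_smul_inv_norm (𝕜 := ℝ) hv

lemma norm_sq_sqrt_smul {r : ℝ} (hr : 0 ≤ r) {s : E} (hs : s ∈ sphere (0 : E) 1) :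
    ‖√r • s‖ ^ 2 = r := by
  rw [mem_sphere_zero_iff_norm] at hs
  rw [norm_smul, hs, mul_one, Real.norm_of_nonneg (Real.sqrt_nonneg r), Real.sq_sqrt hr]

lemma sqrt_smul_inv_norm_smul {r : ℝ} {v : E} (hv : ‖v‖ ^ 2 = r) (hr : 0 < r) :
    √r • ‖v‖⁻¹ • v = v := by
  rw [← hv, Real.sqrt_sq (norm_nonneg v), smul_smul,
    mul_inv_cancel₀ (norm_ne_zero_iff.2 (ne_zero_of_norm_sq_eq hv hr)), one_smul]

lemma inv_norm_smul_sqrt_smul {r : ℝ} (hr : 0 < r) {s : E} (hs : s ∈ sphere (0 : E) 1) :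
    ‖√r • s‖⁻¹ • √r • s = s := by
  rw [mem_sphere_zero_iff_norm] at hs
  rw [norm_smul, hs, mul_one, Real.norm_of_nonneg (Real.sqrt_nonneg r), smul_smul,
    inv_mul_cancel₀ (Real.sqrt_pos.2 hr).ne', one_smul]

def normSqEqHomeomorphSphere {ρ : ℝ} (hρ : 0 < ρ) :
    {v : E | ‖v‖ ^ 2 = ρ} ≃ₜ sphere (0 : E) 1 where
  toFun v := ⟨‖(v : E)‖⁻¹ • (v : E), inv_norm_smul_mem_sphere (ne_zero_of_norm_sq_eq v.2 hρ)⟩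
  invFun s := ⟨√ρ • (s : E), norm_sq_sqrt_smul hρ.le s.2⟩
  left_inv v := Subtype.ext (sqrt_smul_inv_norm_smul v.2 hρ)
  right_inv s := Subtype.ext (inv_norm_smul_sqrt_smul hρ s.2)
  continuous_toFun := by
    refine Continuous.subtype_mk (Continuous.smul ?_ continuous_subtype_val) _
    exact (continuous_norm.comp continuous_subtype_val).inv₀
      fun v => norm_ne_zero_iff.2 (ne_zero_of_norm_sq_eq v.2 hρ)
  continuous_invFun := (continuous_const.smul continuous_subtype_val).subtype_mk _

def normSqEqBundleHomeomorph (S : Set X) {r : X → ℝ} (hr : Continuous r)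
    (hr_pos : ∀ x ∈ S, 0 < r x) :
    {p : X × E | p.1 ∈ S ∧ ‖p.2‖ ^ 2 = r p.1} ≃ₜ S × sphere (0 : E) 1 where
  toFun p := (⟨p.1.1, p.2.1⟩, ⟨‖p.1.2‖⁻¹ • p.1.2,
    inv_norm_smul_mem_sphere (ne_zero_of_norm_sq_eq p.2.2 (hr_pos _ p.2.1))⟩)
  invFun x := ⟨(x.1, √(r x.1) • (x.2 : E)), x.1.2, norm_sq_sqrt_smul (hr_pos _ x.1.2).le x.2.2⟩
  left_inv p := Subtype.ext (Prod.ext rfl (sqrt_smul_inv_norm_smul p.2.2 (hr_pos _ p.2.1)))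
  right_inv x := Prod.ext rfl (Subtype.ext (inv_norm_smul_sqrt_smul (hr_pos _ x.1.2) x.2.2))
  continuous_toFun := by
    have hE : Continuous fun p : {p : X × E | p.1 ∈ S ∧ ‖p.2‖ ^ 2 = r p.1} => (p : X × E).2 :=
      continuous_snd.comp continuous_subtype_val
    refine ((continuous_fst.comp continuous_subtype_val).subtype_mk _).prodMk
      (Continuous.subtype_mk (Continuous.smul ?_ hE) _)
    exact (continuous_norm.comp hE).inv₀
      fun p => norm_ne_zero_iff.2 (ne_zero_of_norm_sq_eq p.2.2 (hr_pos _ p.2.1))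
  continuous_invFun := by
    refine Continuous.subtype_mk ((continuous_subtype_val.comp continuous_fst).prodMk ?_) _
    exact (Real.continuous_sqrt.comp (hr.comp (continuous_subtype_val.comp continuous_fst))).smul
      (continuous_subtype_val.comp continuous_snd)

variable {F G : Type*} [NormedAddCommGroup F] [NormedSpace ℝ F] [NormedAddCommGroup G]
  [NormedSpace ℝ G]

def normSqEqTowerHomeomorph {r : E → ℝ} (hr : Continuous r) {ρ κ : ℝ} (hρ : 0 < ρ)
    (hr_pos : ∀ v : E, ‖v‖ ^ 2 = ρ → 0 < r v) (hr_lt : ∀ v : E, ‖v‖ ^ 2 = ρ → r v < κ) :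
    {x : (E × F) × G | (‖x.1.1‖ ^ 2 = ρ ∧ ‖x.1.2‖ ^ 2 = r x.1.1) ∧ ‖x.2‖ ^ 2 = κ - ‖x.1.2‖ ^ 2} ≃ₜ
      (sphere (0 : E) 1 × sphere (0 : F) 1) × sphere (0 : G) 1 :=
  (normSqEqBundleHomeomorph {w : E × F | w.1 ∈ {v | ‖v‖ ^ 2 = ρ} ∧ ‖w.2‖ ^ 2 = r w.1}
      (r := fun w => κ - ‖w.2‖ ^ 2) (by fun_prop)
      fun w hw => by rw [hw.2]; linarith [hr_lt _ hw.1]).trans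
    (((normSqEqBundleHomeomorph _ hr hr_pos).trans
      ((normSqEqHomeomorphSphere hρ).prodCongr (Homeomorph.refl _))).prodCongr
      (Homeomorph.refl _))

end SphereBundle

lemma Fintype.sum_subtype_eq_sum_ite {ι M : Type*} [Fintype ι] [AddCommMonoid M] {P : ι → Prop}
    [DecidablePred P] (f : ι → M) : ∑ i : {i // P i}, f i = ∑ i, if P i then f i else 0 := by
  rw [← Finset.sum_filter]
  exact (Finset.sum_subtype _ (fun i => by simp) f).symm

namespace EuclideanSpace

variable {ι : Type*}

def restrict (P : ι → Prop) (u : EuclideanSpace ℝ ι) : EuclideanSpace ℝ {i // P i} :=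
  WithLp.toLp 2 fun i => u i

lemma continuous_restrict {P : ι → Prop} : Continuous (restrict P) :=
  (PiLp.continuous_toLp 2 _).comp (continuous_pi fun _ => PiLp.continuous_apply 2 _ _)

variable [Fintype ι]

def sqNormOn (P : ι → Prop) [DecidablePred P] (u : EuclideanSpace ℝ ι) : ℝ :=
  ∑ i, if P i then u i ^ 2 else 0

variable {P : ι → Prop} [DecidablePred P]

lemma sqNormOn_restrict (Q : ι → Prop) [DecidablePred Q] (u : EuclideanSpace ℝ ι) :
    sqNormOn (fun i : {i // P i} => Q i) (restrict P u) = sqNormOn (fun i => P i ∧ Q i) u := by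
  simp only [sqNormOn, restrict, PiLp.toLp_apply]
  rw [Fintype.sum_subtype_eq_sum_ite (fun i => if Q i then u i ^ 2 else 0)]
  exact Finset.sum_congr rfl fun i _ => by simp only [ite_and]

lemma norm_sq_restrict (u : EuclideanSpace ℝ ι) : ‖restrict P u‖ ^ 2 = sqNormOn P u := by
  rw [real_norm_sq_eq, sqNormOn, ← Fintype.sum_subtype_eq_sum_ite]
  rfl

lemma sqNormOn_nonneg (u : EuclideanSpace ℝ ι) : 0 ≤ sqNormOn P u :=
  Finset.sum_nonneg fun i _ => by split_ifs <;> positivity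

lemma sqNormOn_le_norm_sq (u : EuclideanSpace ℝ ι) : sqNormOn P u ≤ ‖u‖ ^ 2 := by
  rw [real_norm_sq_eq]
  exact Finset.sum_le_sum fun i _ => by split_ifs; exacts [le_rfl, sq_nonneg _]

lemma continuous_sqNormOn : Continuous (sqNormOn (ι := ι) P) :=
  continuous_finsetSum _ fun i _ => by
    split_ifs
    · exact (PiLp.continuous_apply 2 _ i).pow 2
    · exact continuous_const

variable (A D : ι → Prop) [DecidablePred A] [DecidablePred D]

def splitHomeomorph (hAD : ∀ i, A i → ¬D i) :
    EuclideanSpace ℝ ι ≃ₜ (EuclideanSpace ℝ {i // ¬A i ∧ ¬D i} × EuclideanSpace ℝ {i // A i}) ×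
      EuclideanSpace ℝ {i // D i} where
  toFun u := ((restrict _ u, restrict A u), restrict D u)
  invFun x := WithLp.toLp 2 fun i =>
    if hA : A i then x.1.2 ⟨i, hA⟩ else if hD : D i then x.2 ⟨i, hD⟩ else x.1.1 ⟨i, hA, hD⟩
  left_inv u := by
    ext i
    simp only [restrict, PiLp.toLp_apply]
    split_ifs <;> rfl
  right_inv x := by
    refine Prod.ext (Prod.ext ?_ ?_) ?_ <;> ext ⟨i, hi⟩ <;> simp only [restrict, PiLp.toLp_apply]
    · rw [dif_neg hi.1, dif_neg hi.2]
    · rw [dif_pos hi]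
    · rw [dif_neg fun hA => hAD i hA hi, dif_pos hi]
  continuous_toFun := (continuous_restrict.prodMk continuous_restrict).prodMk continuous_restrict
  continuous_invFun := by
    refine (PiLp.continuous_toLp 2 _).comp (continuous_pi fun i => ?_)
    split_ifs
    · exact (PiLp.continuous_apply 2 _ _).comp (continuous_snd.comp continuous_fst)
    · exact (PiLp.continuous_apply 2 _ _).comp continuous_snd
    · exact (PiLp.continuous_apply 2 _ _).comp (continuous_fst.comp continuous_fst)

def sphereHomeomorphOfCardEq {m : ℕ} (h : Fintype.card ι = m) :
    sphere (0 : EuclideanSpace ℝ ι) 1 ≃ₜ sphere (0 : EuclideanSpace ℝ (Fin m)) 1 :=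
  let e := LinearIsometryEquiv.piLpCongrLeft 2 ℝ ℝ (Fintype.equivFinOfCardEq h)
  e.toHomeomorph.subtype fun v => by simp

end EuclideanSpace

lemma Fin.card_subtype_val {n : ℕ} (P : ℕ → Prop) [DecidablePred P] :
    Fintype.card {j : Fin n // P j} = #{x ∈ range n | P x} := by
  rw [Fintype.card_subtype, ← card_map Fin.valEmbedding, map_filter', Fin.map_valEmbedding_univ,
    Nat.Iio_eq_range]
  exact congrArg card (filter_congr fun x hx =>
    ⟨fun ⟨_, ha, e⟩ => e ▸ ha, fun h => ⟨⟨x, mem_range.1 hx⟩, h, rfl⟩⟩)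

namespace QuadR3

open EuclideanSpace

variable {q l k p n : ℕ}

abbrev blockA (q : ℕ) (j : Fin n) : Prop := (j : ℕ) < q

abbrev blockC (l k : ℕ) (j : Fin n) : Prop := l ≤ (j : ℕ) ∧ (j : ℕ) < k

abbrev blockD (k p : ℕ) (j : Fin n) : Prop := k ≤ (j : ℕ) ∧ (j : ℕ) < p

abbrev blockM (q k p : ℕ) (j : Fin n) : Prop := ¬blockA q j ∧ ¬blockD k p j

lemma card_blockA (hqn : q ≤ n) : Fintype.card {j : Fin n // blockA q j} = q := by
  rw [Fin.card_subtype_val (· < q), show {x ∈ range n | x < q} = range q by ext; simp; omega]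
  exact card_range q

lemma card_blockD (hpn : p ≤ n) : Fintype.card {j : Fin n // blockD k p j} = p - k := by
  rw [Fin.card_subtype_val (fun x => k ≤ x ∧ x < p),
    show {x ∈ range n | k ≤ x ∧ x < p} = Ico k p by ext; simp; omega]
  exact Nat.card_Ico k p

lemma card_blockM (hqk : q ≤ k) (hkp : k ≤ p) (hpn : p ≤ n) :
    Fintype.card {j : Fin n // blockM q k p j} = n - p + k - q := by
  rw [Fin.card_subtype_val (fun x => ¬x < q ∧ ¬(k ≤ x ∧ x < p)),
    show {x ∈ range n | ¬x < q ∧ ¬(k ≤ x ∧ x < p)} = Ico q k ∪ Ico p n by ext; simp; omega,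
    card_union_of_disjoint (disjoint_left.2 fun x h h' => by simp at h h'; omega),
    Nat.card_Ico, Nat.card_Ico]
  omega

lemma mem_quadR3_iff (hql : q ≤ l) (hlk : l ≤ k) (hkp : k ≤ p) (u : EuclideanSpace ℝ (Fin n)) :
    u ∈ quadR3 q l k p n ↔
      (sqNormOn (blockM q k p) u = (n : ℝ) - p + k - q ∧
        sqNormOn (blockA q) u = sqNormOn (fun j => blockM q k p j ∧ blockC l k j) u + (l + q - k)) ∧
      sqNormOn (blockD k p) u = (p : ℝ) - k + q - sqNormOn (blockA q) u := by
  set a := sqNormOn (blockA q) u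
  set c := sqNormOn (fun j => blockM q k p j ∧ blockC l k j) u
  set d := sqNormOn (blockD k p) u
  set m := sqNormOn (blockM q k p) u
  have h₁ : (∑ j : Fin n, if (j : ℕ) < l ∨ p ≤ (j : ℕ) then u j ^ 2 else 0) = a + m - c := by
    simp only [a, c, m, sqNormOn, blockA, blockC, blockD, blockM, ← sum_add_distrib,
      ← sum_sub_distrib]
    refine sum_congr rfl fun j _ => ?_
    split_ifs <;> first | (exfalso; omega) | ring
  have h₂ : (∑ j : Fin n, if (j : ℕ) < q then -(u j ^ 2)
      else if l ≤ (j : ℕ) ∧ (j : ℕ) < k then u j ^ 2 else 0) = c - a := by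
    simp only [a, c, sqNormOn, blockA, blockC, blockD, blockM, ← sum_sub_distrib]
    refine sum_congr rfl fun j _ => ?_
    split_ifs <;> first | (exfalso; omega) | ring
  have h₃ : (∑ j : Fin n, if (j : ℕ) < q ∨ (k ≤ (j : ℕ) ∧ (j : ℕ) < p) then u j ^ 2 else 0)
      = a + d := by
    simp only [a, d, sqNormOn, blockA, blockD, ← sum_add_distrib]
    refine sum_congr rfl fun j _ => ?_
    split_ifs <;> first | (exfalso; omega) | ring
  simp only [quadR3, Set.mem_ofPred_eq, h₁, h₂, h₃]
  constructor
  · rintro ⟨e₁, e₂, e₃⟩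
    exact ⟨⟨by linarith, by linarith⟩, by linarith⟩
  · rintro ⟨⟨e₁, e₂⟩, e₃⟩
    exact ⟨by linarith, by linarith, by linarith⟩

def fiberRadiusSq (q l k p : ℕ) (v : EuclideanSpace ℝ {j : Fin n // blockM q k p j}) : ℝ :=
  sqNormOn (fun j => blockC l k j.1) v + (l + q - k)

lemma fiberRadiusSq_pos (hklq : k < l + q) (v : EuclideanSpace ℝ {j : Fin n // blockM q k p j}) :
    0 < fiberRadiusSq q l k p v := by
  have hc := sqNormOn_nonneg (P := fun j : {j : Fin n // blockM q k p j} => blockC l k j.1) v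
  have hδ : (k : ℝ) < l + q := by exact_mod_cast hklq
  rw [fiberRadiusSq]
  linarith

lemma fiberRadiusSq_lt (hineq : n + k + l < 2 * p + q)
    {v : EuclideanSpace ℝ {j : Fin n // blockM q k p j}} (hv : ‖v‖ ^ 2 = (n : ℝ) - p + k - q) :
    fiberRadiusSq q l k p v < p - k + q := by
  have hc := sqNormOn_le_norm_sq (P := fun j : {j : Fin n // blockM q k p j} => blockC l k j.1) v
  have h : (n : ℝ) + k + l < 2 * p + q := by exact_mod_cast hineq
  rw [fiberRadiusSq]
  linarith

def homeomorphNormSqTower (hql : q ≤ l) (hlk : l ≤ k) (hkp : k ≤ p) :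
    quadR3 q l k p n ≃ₜ
      {x : (EuclideanSpace ℝ {j : Fin n // blockM q k p j} ×
            EuclideanSpace ℝ {j : Fin n // blockA q j}) ×
          EuclideanSpace ℝ {j : Fin n // blockD k p j} |
        (‖x.1.1‖ ^ 2 = (n : ℝ) - p + k - q ∧ ‖x.1.2‖ ^ 2 = fiberRadiusSq q l k p x.1.1) ∧
          ‖x.2‖ ^ 2 = (p : ℝ) - k + q - ‖x.1.2‖ ^ 2} :=
  (splitHomeomorph (blockA q) (blockD k p) fun j hA hD => by omega).subtype fun u => by
    rw [mem_quadR3_iff hql hlk hkp]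
    simp only [splitHomeomorph, fiberRadiusSq, Homeomorph.homeomorph_mk_coe, Equiv.coe_fn_mk,
      Set.mem_ofPred_eq, norm_sq_restrict]
    rw [sqNormOn_restrict (Q := blockC l k)]

end QuadR3

end

open QuadR3 EuclideanSpace in
theorem stmt1 (q l k p n : ℕ) (hql : q < l) (hlk : l < k) (hkp : k < p)
    (hpn : p < n) (hklq : k < l + q) (hineq : n + k + l < 2 * p + q) :
    Nonempty (quadR3 q l k p n ≃ₜ
      sphere (0 : EuclideanSpace ℝ (Fin (n - p + k - q))) 1 ×
      sphere (0 : EuclideanSpace ℝ (Fin (p - k))) 1 ×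
      sphere (0 : EuclideanSpace ℝ (Fin q)) 1) := by
  have hm : (0 : ℝ) < n - p + k - q := by
    have : (p : ℝ) + q < n + k := by exact_mod_cast (by omega : p + q < n + k)
    linarith
  have tower := normSqEqTowerHomeomorph (F := EuclideanSpace ℝ {j : Fin n // blockA q j})
    (G := EuclideanSpace ℝ {j : Fin n // blockD k p j})
    (continuous_sqNormOn.add continuous_const) hm (fun v _ => fiberRadiusSq_pos hklq v)
    (fun _ hv => fiberRadiusSq_lt hineq hv)
  refine ⟨(homeomorphNormSqTower hql.le hlk.le hkp.le).trans (tower.trans ?_)⟩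
  exact (Homeomorph.prodAssoc _ _ _).trans <|
    (sphereHomeomorphOfCardEq (card_blockM (hql.le.trans hlk.le) hkp.le hpn.le)).prodCongr <|
      (Homeomorph.prodComm _ _).trans <|
        (sphereHomeomorphOfCardEq (card_blockD hpn.le)).prodCongr
          (sphereHomeomorphOfCardEq (card_blockA (by omega)))
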